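/- For every nonzero real symmetric 3×3 matrix Q⁰ with tr(Q⁰) = 0 there exist U, U′ ∈ SO(3) such that M(Uᵀ·Q⁰·U) has at least two positive eigenvalues (counted with multiplicity) and M(U′ᵀ·Q⁰·U′) has at least two negative eigenvalues (counted with multiplicity), where M(Q) = L(Q) − 5⟨e₁,Qe₁⟩·I. -/

import Mathlib

noncomputable section
open Matrix

abbrev M3 := Matrix (Fin 3) (Fin 3) ℝ

/-- The group `SO(3)` of real 3×3 orthogonal matrices with determinant 1. -/
def SO3 : Set M3 := {U | Uᵀ * U = 1 ∧ U.det = 1}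

/-- The matrix of the orthogonal projection of `ℝ³` onto the span of `e₁`. -/
def P : M3 := Matrix.single 0 0 1

/-- `L(Q) = 35 p Q p − 10 p Q − 10 Q p + 2 Q`. -/
def L (Q : M3) : M3 :=
  (35 : ℝ) • (P * Q * P) - (10 : ℝ) • (P * Q) - (10 : ℝ) • (Q * P) + (2 : ℝ) • Q

/-- The quadrupole-quadrupole interaction `F(Q₁,Q₂) = tr (L(Q₁) Q₂)`. -/
def F (Q₁ Q₂ : M3) : ℝ := (L Q₁ * Q₂).trace

/-- The rotation orbit `W(Q⁰) = {Uᵀ Q⁰ U : U ∈ SO(3)}` of a matrix `Q⁰`. -/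
def W (Q0 : M3) : Set M3 := {Q | ∃ U ∈ SO3, Q = Uᵀ * Q0 * U}

/-- `M(Q) = L(Q) − 5⟨e₁, Q e₁⟩·I`. -/
def Mq (Q : M3) : M3 := L Q - (5 * Q 0 0) • (1 : M3)

/-- A symmetric 3×3 matrix `A` has at least two eigenvalues (with multiplicity) satisfying
the predicate `Pred`: there are two orthonormal eigenvectors whose eigenvalues satisfy
`Pred`. -/
def HasTwoEig (A : M3) (Pred : ℝ → Prop) : Prop :=
  ∃ u v : Fin 3 → ℝ, (∑ i, u i * u i) = 1 ∧ (∑ i, v i * v i) = 1 ∧ (∑ i, u i * v i) = 0 ∧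
    ∃ a b : ℝ, Pred a ∧ Pred b ∧ A.mulVec u = a • u ∧ A.mulVec v = b • v

/- ------------ auxiliary lemmas ------------- -/

lemma so3_mul {A B : M3} (hA : A ∈ SO3) (hB : B ∈ SO3) : A * B ∈ SO3 := by
  obtain ⟨hA1, hA2⟩ := hA
  obtain ⟨hB1, hB2⟩ := hB
  constructor
  · rw [Matrix.transpose_mul, mul_assoc, ← mul_assoc Aᵀ, hA1, one_mul, hB1]
  · rw [Matrix.det_mul, hA2, hB2, one_mul]

/-- Diagonalization of a symmetric 3×3 matrix by an `SO(3)` rotation. -/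
lemma exists_diag (Q0 : M3) (hs : Q0ᵀ = Q0) :
    ∃ U ∈ SO3, ∃ d : Fin 3 → ℝ, Uᵀ * Q0 * U = diagonal d := by
  have hH : Q0.IsHermitian := by
    rwa [Matrix.IsHermitian, Matrix.conjTranspose_eq_transpose_of_trivial]
  have hd : star (hH.eigenvectorUnitary : M3) * Q0 * (hH.eigenvectorUnitary : M3) = diagonal (RCLike.ofReal ∘ hH.eigenvalues) := by
    have := hH.conjStarAlgAut_star_eigenvectorUnitary
    rwa [Unitary.conjStarAlgAut_star_apply] at this
  set V : M3 := (hH.eigenvectorUnitary : M3) with hV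
  have hstar : (star V : M3) = Vᵀ := by ext i j; simp [Matrix.star_apply]
  have hVu : Vᵀ * V = 1 := by
    have := (Matrix.mem_unitaryGroup_iff').mp hH.eigenvectorUnitary.2
    rwa [hstar] at this
  rw [hstar] at hd
  have hdet2 : V.det * V.det = 1 := by
    have := congrArg Matrix.det hVu
    rwa [Matrix.det_mul, Matrix.det_transpose, Matrix.det_one] at this
  rcases mul_self_eq_one_iff.mp hdet2 with h1 | h1
  · exact ⟨V, ⟨hVu, h1⟩, _, hd⟩
  · set S : M3 := diagonal ![1, 1, -1] with hS
    have hSt : Sᵀ = S := Matrix.diagonal_transpose _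
    have hSS : S * S = 1 := by
      rw [hS, Matrix.diagonal_mul_diagonal]
      ext i j
      fin_cases i <;> fin_cases j <;> simp [Matrix.one_apply]
    have hSdet : S.det = -1 := by
      rw [hS, Matrix.det_diagonal]
      simp [Fin.prod_univ_three]
    refine ⟨V * S, ⟨?_, ?_⟩, RCLike.ofReal ∘ hH.eigenvalues, ?_⟩
    · rw [Matrix.transpose_mul, hSt, mul_assoc, ← mul_assoc Vᵀ, hVu, one_mul, hSS]
    · rw [Matrix.det_mul, h1, hSdet]; norm_num
    · rw [Matrix.transpose_mul, hSt]
      calc S * Vᵀ * Q0 * (V * S) = S * (Vᵀ * Q0 * V) * S := by noncomm_ring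
        _ = S * diagonal (RCLike.ofReal ∘ hH.eigenvalues) * S := by rw [hd]
        _ = diagonal (RCLike.ofReal ∘ hH.eigenvalues) := by
            rw [hS, Matrix.diagonal_mul_diagonal, Matrix.diagonal_mul_diagonal]
            ext i j
            fin_cases i <;> fin_cases j <;>
              norm_num [Matrix.diagonal_apply]

/-- Conjugating a diagonalization by a signed permutation: swap entries 0 and 1. -/
lemma conj_swap01 {Q0 U : M3} {d : Fin 3 → ℝ} (hU : U ∈ SO3)
    (h : Uᵀ * Q0 * U = diagonal d) :
    ∃ U' ∈ SO3, U'ᵀ * Q0 * U' = diagonal ![d 1, d 0, d 2] := by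
  set C : M3 := !![0,1,0; 1,0,0; 0,0,-1] with hC
  have hCso : C ∈ SO3 := by
    constructor
    · ext i j; fin_cases i <;> fin_cases j <;>
        simp [hC, Matrix.mul_apply, Fin.sum_univ_three, Matrix.one_apply, Matrix.vecHead, Matrix.vecTail]
    · rw [hC, Matrix.det_fin_three]; simp
  refine ⟨U * C, so3_mul hU hCso, ?_⟩
  have : (U * C)ᵀ * Q0 * (U * C) = Cᵀ * (Uᵀ * Q0 * U) * C := by
    rw [Matrix.transpose_mul]; noncomm_ring
  rw [this, h]
  ext i j
  fin_cases i <;> fin_cases j <;>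
    simp [hC, Matrix.mul_apply, Fin.sum_univ_three, Matrix.diagonal_apply, Matrix.vecHead, Matrix.vecTail] <;> ring

/-- Conjugating a diagonalization by a signed permutation: swap entries 0 and 2. -/
lemma conj_swap02 {Q0 U : M3} {d : Fin 3 → ℝ} (hU : U ∈ SO3)
    (h : Uᵀ * Q0 * U = diagonal d) :
    ∃ U' ∈ SO3, U'ᵀ * Q0 * U' = diagonal ![d 2, d 1, d 0] := by
  set C : M3 := !![0,0,1; 0,-1,0; 1,0,0] with hC
  have hCso : C ∈ SO3 := by
    constructor
    · ext i j; fin_cases i <;> fin_cases j <;>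
        simp [hC, Matrix.mul_apply, Fin.sum_univ_three, Matrix.one_apply, Matrix.vecHead, Matrix.vecTail]
    · rw [hC, Matrix.det_fin_three]; simp
  refine ⟨U * C, so3_mul hU hCso, ?_⟩
  have : (U * C)ᵀ * Q0 * (U * C) = Cᵀ * (Uᵀ * Q0 * U) * C := by
    rw [Matrix.transpose_mul]; noncomm_ring
  rw [this, h]
  ext i j
  fin_cases i <;> fin_cases j <;>
    simp [hC, Matrix.mul_apply, Fin.sum_univ_three, Matrix.diagonal_apply, Matrix.vecHead, Matrix.vecTail] <;> ring

lemma Mq_diagonal (e : Fin 3 → ℝ) :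
    Mq (diagonal e) = diagonal ![12 * e 0, 2 * e 1 - 5 * e 0, 2 * e 2 - 5 * e 0] := by
  ext i j
  fin_cases i <;> fin_cases j <;>
    simp [Mq, L, P, Matrix.mul_apply, Fin.sum_univ_three, Matrix.diagonal_apply,
      Matrix.single, Matrix.one_apply] <;> ring

lemma hasTwoEig_of_diag (e : Fin 3 → ℝ) (Pred : ℝ → Prop)
    (h1 : Pred (2 * e 1 - 5 * e 0)) (h2 : Pred (2 * e 2 - 5 * e 0)) :
    HasTwoEig (Mq (diagonal e)) Pred := by
  refine ⟨![0,1,0], ![0,0,1], by simp [Fin.sum_univ_three], by simp [Fin.sum_univ_three],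
    by simp [Fin.sum_univ_three], 2 * e 1 - 5 * e 0, 2 * e 2 - 5 * e 0, h1, h2, ?_, ?_⟩ <;>
  · rw [Mq_diagonal]
    ext i
    fin_cases i <;> simp [Matrix.mulVec, dotProduct, Fin.sum_univ_three]

/-- For every nonzero real symmetric traceless `Q⁰` there are rotations `U, U′ ∈ SO(3)` such
that `M(Uᵀ Q⁰ U)` has at least two positive eigenvalues and `M(U′ᵀ Q⁰ U′)` has at least two
negative eigenvalues (counted with multiplicity). -/
theorem stmt17 (Q0 : M3) (hs : Q0ᵀ = Q0) (ht : Q0.trace = 0) (hn : Q0 ≠ 0) :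
    (∃ U ∈ SO3, HasTwoEig (Mq (Uᵀ * Q0 * U)) (fun x => 0 < x)) ∧
      (∃ U' ∈ SO3, HasTwoEig (Mq (U'ᵀ * Q0 * U')) (fun x => x < 0)) := by
  obtain ⟨U, hU, d, hd⟩ := exists_diag Q0 hs
  -- general facts about any SO3-diagonalization of Q0
  have key : ∀ (U : M3), U ∈ SO3 → ∀ e : Fin 3 → ℝ, Uᵀ * Q0 * U = diagonal e →
      e 0 + e 1 + e 2 = 0 ∧ ¬(e 0 = 0 ∧ e 1 = 0 ∧ e 2 = 0) := by
    intro V hV e he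
    have hVV : V * Vᵀ = 1 := mul_eq_one_comm.mp hV.1
    constructor
    · have : (diagonal e).trace = 0 := by
        rw [← he, Matrix.trace_mul_comm, ← mul_assoc, hVV, one_mul, ht]
      simpa [Matrix.trace_diagonal, Fin.sum_univ_three] using this
    · rintro ⟨h0, h1, h2⟩
      apply hn
      have he0 : diagonal e = 0 := by
        ext i j; fin_cases i <;> fin_cases j <;> simp [Matrix.diagonal_apply, h0, h1, h2]
      have : V * (Vᵀ * Q0 * V) * Vᵀ = Q0 := by
        calc V * (Vᵀ * Q0 * V) * Vᵀ = (V * Vᵀ) * Q0 * (V * Vᵀ) := by noncomm_ring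
          _ = Q0 := by rw [hVV]; simp
      rw [← this, he, he0]; simp
  -- helper producing the positive / negative parts from an ordering assumption
  have main : ∀ (V : M3), V ∈ SO3 → ∀ e : Fin 3 → ℝ, Vᵀ * Q0 * V = diagonal e →
      ((e 0 ≤ e 1 ∧ e 0 ≤ e 2) → HasTwoEig (Mq (Vᵀ * Q0 * V)) (fun x => 0 < x)) ∧
      ((e 1 ≤ e 0 ∧ e 2 ≤ e 0) → HasTwoEig (Mq (Vᵀ * Q0 * V)) (fun x => x < 0)) := by
    intro V hV e he
    obtain ⟨hsum, hnz⟩ := key V hV e he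
    constructor
    · rintro ⟨hle1, hle2⟩
      have h0 : e 0 < 0 := by
        by_contra h
        push_neg at h
        exact hnz ⟨by linarith, by linarith, by linarith⟩
      rw [he]
      exact hasTwoEig_of_diag e _ (by linarith) (by linarith)
    · rintro ⟨hle1, hle2⟩
      have h0 : 0 < e 0 := by
        by_contra h
        push_neg at h
        exact hnz ⟨by linarith, by linarith, by linarith⟩
      rw [he]
      exact hasTwoEig_of_diag e _ (by linarith) (by linarith)
  constructor
  · -- two positive eigenvalues: put a minimal eigenvalue in position 0
    rcases le_total (d 0) (d 1) with h01 | h01 <;> rcases le_total (d 0) (d 2) with h02 | h02 <;>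
      rcases le_total (d 1) (d 2) with h12 | h12
    · exact ⟨U, hU, (main U hU d hd).1 ⟨h01, h02⟩⟩
    · exact ⟨U, hU, (main U hU d hd).1 ⟨h01, h02⟩⟩
    · obtain ⟨U', hU', hd'⟩ := conj_swap02 hU hd
      exact ⟨U', hU', (main U' hU' _ hd').1 ⟨by simpa using le_trans h02 h01, by simpa using h02⟩⟩
    · obtain ⟨U', hU', hd'⟩ := conj_swap02 hU hd
      exact ⟨U', hU', (main U' hU' _ hd').1 ⟨by simpa using h12, by simpa using h02⟩⟩
    · obtain ⟨U', hU', hd'⟩ := conj_swap01 hU hd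
      exact ⟨U', hU', (main U' hU' _ hd').1 ⟨by simpa using h01, by simpa using h12⟩⟩
    · obtain ⟨U', hU', hd'⟩ := conj_swap01 hU hd
      exact ⟨U', hU', (main U' hU' _ hd').1 ⟨by simpa using h01, by simpa using le_trans h01 h02⟩⟩
    · obtain ⟨U', hU', hd'⟩ := conj_swap01 hU hd
      exact ⟨U', hU', (main U' hU' _ hd').1 ⟨by simpa using h01, by simpa using h12⟩⟩
    · obtain ⟨U', hU', hd'⟩ := conj_swap02 hU hd
      exact ⟨U', hU', (main U' hU' _ hd').1 ⟨by simpa using h12, by simpa using h02⟩⟩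
  · -- two negative eigenvalues: put a maximal eigenvalue in position 0
    rcases le_total (d 1) (d 0) with h01 | h01 <;> rcases le_total (d 2) (d 0) with h02 | h02 <;>
      rcases le_total (d 2) (d 1) with h12 | h12
    · exact ⟨U, hU, (main U hU d hd).2 ⟨h01, h02⟩⟩
    · exact ⟨U, hU, (main U hU d hd).2 ⟨h01, h02⟩⟩
    · obtain ⟨U', hU', hd'⟩ := conj_swap02 hU hd
      exact ⟨U', hU', (main U' hU' _ hd').2 ⟨by simpa using le_trans h01 h02, by simpa using h02⟩⟩
    · obtain ⟨U', hU', hd'⟩ := conj_swap02 hU hd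
      exact ⟨U', hU', (main U' hU' _ hd').2 ⟨by simpa using h12, by simpa using h02⟩⟩
    · obtain ⟨U', hU', hd'⟩ := conj_swap01 hU hd
      exact ⟨U', hU', (main U' hU' _ hd').2 ⟨by simpa using h01, by simpa using h12⟩⟩
    · obtain ⟨U', hU', hd'⟩ := conj_swap01 hU hd
      exact ⟨U', hU', (main U' hU' _ hd').2 ⟨by simpa using h01, by simpa using le_trans h02 h01⟩⟩
    · obtain ⟨U', hU', hd'⟩ := conj_swap01 hU hd
      exact ⟨U', hU', (main U' hU' _ hd').2 ⟨by simpa using h01, by simpa using h12⟩⟩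
    · obtain ⟨U', hU', hd'⟩ := conj_swap02 hU hd
      exact ⟨U', hU', (main U' hU' _ hd').2 ⟨by simpa using h12, by simpa using h02⟩⟩
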